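/- For any open set Ω ⊆ ℝ^d and exponents 1 ≤ q ≤ p < ∞ with λ_p(Ω) and λ_q(Ω) finite and positive, the inequality λ_p(Ω)^{1/p} / λ_q(Ω)^{1/q} ≥ q/p holds; equivalently, λ_q(Ω) ≤ (p/q)^q λ_p(Ω)^{q/p}. -/

import Mathlib

/-!
For an admissible `u`, test `λ_q` with `v = |u|^{p/q}`. Then `|v|^q = |u|^p` and
`|∇v| ≤ (p/q) |u|^{p/q-1} |∇u|`, so `∫ |∇v|^q ≤ (p/q)^q ∫ |u|^{p-q} |∇u|^q`, and Hölder's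
inequality with the exponents `p/(p-q)` and `p/q` bounds the last integral by
`(∫ |u|^p)^{1-q/p} (∫ |∇u|^p)^{q/p}`. Hence `R_q(v) ≤ (p/q)^q R_p(u)^{q/p}` for the Rayleigh
quotients; as `t ↦ (p/q)^q t^{q/p}` is monotone and continuous, taking the infimum over `u` gives
`λ_q ≤ (p/q)^q λ_p^{q/p}`, and the other form follows by taking `q`-th roots.
-/

open MeasureTheory
open scoped ENNReal

/-- First Dirichlet eigenvalue of the `p`-Laplacian on an open set `Ω ⊆ ℝ^d`,
defined as the infimum of Rayleigh quotients over nonzero `C_c^1` test functions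
supported in `Ω`; by convention it is `+∞` if no admissible function exists. -/
noncomputable def lambdaP (d : ℕ) (p : ℝ) (Ω : Set (EuclideanSpace ℝ (Fin d))) : ℝ≥0∞ :=
  sInf {R : ℝ≥0∞ | ∃ u : EuclideanSpace ℝ (Fin d) → ℝ,
    ContDiff ℝ 1 u ∧ HasCompactSupport u ∧ tsupport u ⊆ Ω ∧ u ≠ 0 ∧
    R = ENNReal.ofReal ((∫ x, ‖gradient u x‖ ^ p) / (∫ x, |u x| ^ p))}

theorem integral_norm_rpow_mul_norm_rpow_le {α E F : Type*} [MeasurableSpace α] {μ : Measure α}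
    [NormedAddCommGroup E] [NormedAddCommGroup F] {p q : ℝ} (hq : 0 < q) (hqp : q < p)
    {f : α → E} {g : α → F} (hf : MemLp f (ENNReal.ofReal p) μ)
    (hg : MemLp g (ENNReal.ofReal p) μ) :
    ∫ x, ‖f x‖ ^ (p - q) * ‖g x‖ ^ q ∂μ ≤
      (∫ x, ‖f x‖ ^ p ∂μ) ^ ((p - q) / p) * (∫ x, ‖g x‖ ^ p ∂μ) ^ (q / p) := by
  have hpq : 0 < p - q := sub_pos.mpr hqp
  have hp : 0 < p := hq.trans hqp
  have hconj : (p / (p - q)).HolderConjugate (p / q) := by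
    rw [Real.holderConjugate_iff]
    refine ⟨(one_lt_div hpq).mpr (by linarith), ?_⟩
    field_simp
    ring
  have hf' : MemLp (fun x => ‖f x‖ ^ (p - q)) (ENNReal.ofReal (p / (p - q))) μ := by
    simpa [ENNReal.ofReal_div_of_pos hpq, hpq.le] using hf.norm_rpow_div (ENNReal.ofReal (p - q))
  have hg' : MemLp (fun x => ‖g x‖ ^ q) (ENNReal.ofReal (p / q)) μ := by
    simpa [ENNReal.ofReal_div_of_pos hq, hq.le] using hg.norm_rpow_div (ENNReal.ofReal q)
  have h := integral_mul_le_Lp_mul_Lq_of_nonneg hconj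
    (.of_forall fun x => by positivity) (.of_forall fun x => by positivity) hf' hg'
  have hpow : ∀ {s y : ℝ}, 0 < s → 0 ≤ y → (y ^ s) ^ (p / s) = y ^ p := fun hs hy => by
    rw [← Real.rpow_mul hy, mul_div_cancel₀ _ hs.ne']
  simpa only [hpow hpq (norm_nonneg _), hpow hq (norm_nonneg _), one_div_div] using h

section Rayleigh

variable {E : Type*} [NormedAddCommGroup E] [InnerProductSpace ℝ E] [CompleteSpace E]

theorem norm_gradient_eq_norm_fderiv (f : E → ℝ) (x : E) : ‖gradient f x‖ = ‖fderiv ℝ f x‖ :=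
  (InnerProductSpace.toDual ℝ E).symm.norm_map _

variable [MeasurableSpace E] (μ : Measure E)

noncomputable def rayleighQuotient (p : ℝ) (u : E → ℝ) : ℝ :=
  (∫ x, ‖gradient u x‖ ^ p ∂μ) / (∫ x, |u x| ^ p ∂μ)

theorem rayleighQuotient_nonneg (p : ℝ) (u : E → ℝ) : 0 ≤ rayleighQuotient μ p u :=
  div_nonneg (integral_nonneg fun _ => by positivity) (integral_nonneg fun _ => by positivity)

variable {μ} [BorelSpace E] [IsFiniteMeasureOnCompacts μ]

theorem integral_norm_gradient_norm_rpow_le {p q : ℝ} (hq : 0 < q) (hqp : q < p)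
    {u : E → ℝ} (hu : ContDiff ℝ 1 u) (hcs : HasCompactSupport u) :
    ∫ x, ‖gradient (fun x => ‖u x‖ ^ (p / q)) x‖ ^ q ∂μ ≤
      (p / q) ^ q * ∫ x, ‖u x‖ ^ (p - q) * ‖fderiv ℝ u x‖ ^ q ∂μ := by
  have hr : 1 < p / q := (one_lt_div hq).mpr hqp
  have hpq : 0 < p - q := sub_pos.mpr hqp
  rw [← integral_const_mul]
  refine integral_mono_of_nonneg (.of_forall fun x => by positivity) ?_ (.of_forall fun x => ?_)
  · have hcs' : HasCompactSupport fun x => ‖fderiv ℝ u x‖ ^ q :=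
      (hcs.fderiv ℝ).comp_left (g := fun L => ‖L‖ ^ q) (by simp [hq.ne'])
    exact Continuous.integrable_of_hasCompactSupport (by fun_prop (discharger := positivity))
      (hcs'.mul_left.mul_left)
  · have hD := norm_fderiv_norm_rpow_le (hu.differentiable one_ne_zero) (x := x) hr
    calc ‖gradient (fun x => ‖u x‖ ^ (p / q)) x‖ ^ q
        ≤ (p / q * ‖u x‖ ^ (p / q - 1) * ‖fderiv ℝ u x‖) ^ q := by
          rw [norm_gradient_eq_norm_fderiv]
          exact Real.rpow_le_rpow (norm_nonneg _) hD hq.le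
      _ = (p / q) ^ q * (‖u x‖ ^ (p - q) * ‖fderiv ℝ u x‖ ^ q) := by
          rw [Real.mul_rpow (by positivity) (norm_nonneg _),
            Real.mul_rpow (by positivity) (by positivity), ← Real.rpow_mul (norm_nonneg _),
            sub_one_mul, div_mul_cancel₀ _ hq.ne', mul_assoc]

theorem rayleighQuotient_norm_rpow_le {p q : ℝ} (hq : 0 < q) (hqp : q < p)
    {u : E → ℝ} (hu : ContDiff ℝ 1 u) (hcs : HasCompactSupport u) :
    rayleighQuotient μ q (fun x => ‖u x‖ ^ (p / q)) ≤
      (p / q) ^ q * rayleighQuotient μ p u ^ (q / p) := by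
  have hp : 0 < p := hq.trans hqp
  have hdenom : ∫ x, |‖u x‖ ^ (p / q)| ^ q ∂μ = ∫ x, |u x| ^ p ∂μ := by
    congr 1 with x
    rw [abs_of_nonneg (by positivity), ← Real.rpow_mul (norm_nonneg _),
      div_mul_cancel₀ _ hq.ne', Real.norm_eq_abs]
  have holder := integral_norm_rpow_mul_norm_rpow_le (μ := μ) hq hqp
    (hu.continuous.memLp_of_hasCompactSupport hcs)
    ((hu.continuous_fderiv one_ne_zero).memLp_of_hasCompactSupport (hcs.fderiv ℝ))
  simp only [Real.norm_eq_abs] at holder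
  unfold rayleighQuotient
  simp only [hdenom, norm_gradient_eq_norm_fderiv u]
  set U := ∫ x, |u x| ^ p ∂μ
  set G := ∫ x, ‖fderiv ℝ u x‖ ^ p ∂μ
  have hU : 0 ≤ U := integral_nonneg fun x => by positivity
  have hG : 0 ≤ G := integral_nonneg fun x => by positivity
  rcases hU.eq_or_lt with hU0 | hU0
  · simp [← hU0, Real.zero_rpow (div_pos hq hp).ne']
  calc (∫ x, ‖gradient (fun x => ‖u x‖ ^ (p / q)) x‖ ^ q ∂μ) / U
      ≤ (p / q) ^ q * (U ^ ((p - q) / p) * G ^ (q / p)) / U := by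
        gcongr
        refine (integral_norm_gradient_norm_rpow_le hq hqp hu hcs).trans ?_
        simp only [Real.norm_eq_abs]
        gcongr
    _ = (p / q) ^ q * (G / U) ^ (q / p) := by
        have hsplit : U ^ ((p - q) / p) * U ^ (q / p) = U := by
          rw [← Real.rpow_add hU0, sub_div, sub_add_cancel, div_self hp.ne', Real.rpow_one]
        rw [Real.div_rpow hG hU, mul_div_assoc]
        congr 1
        rw [div_eq_div_iff hU0.ne' (by positivity), mul_right_comm, hsplit, mul_comm]

end Rayleigh

theorem lambdaP_le_ofReal_rayleighQuotient {d : ℕ} {p : ℝ} {Ω : Set (EuclideanSpace ℝ (Fin d))}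
    {u : EuclideanSpace ℝ (Fin d) → ℝ} (hu : ContDiff ℝ 1 u) (hcs : HasCompactSupport u)
    (hΩ : tsupport u ⊆ Ω) (hne : u ≠ 0) :
    lambdaP d p Ω ≤ ENNReal.ofReal (rayleighQuotient volume p u) :=
  sInf_le ⟨u, hu, hcs, hΩ, hne, rfl⟩

theorem lambdaP_le_ofReal_mul_lambdaP_rpow {d : ℕ} {p q : ℝ} (hq : 0 < q) (hqp : q ≤ p)
    (Ω : Set (EuclideanSpace ℝ (Fin d))) :
    lambdaP d q Ω ≤ ENNReal.ofReal ((p / q) ^ q) * lambdaP d p Ω ^ (q / p) := by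
  rcases hqp.eq_or_lt with rfl | hqp
  · simp [div_self hq.ne']
  have hs : 0 < q / p := div_pos hq (hq.trans hqp)
  have hr : 0 < p / q := div_pos (hq.trans hqp) hq
  set f : ℝ≥0∞ → ℝ≥0∞ := fun t => ENNReal.ofReal ((p / q) ^ q) * t ^ (q / p)
  have hf_mono : Monotone f := fun a b hab => by dsimp only [f]; gcongr
  have hf_cont : Continuous f :=
    (ENNReal.continuous_const_mul ENNReal.ofReal_ne_top).comp ENNReal.continuous_rpow_const
  have hf_top : f ⊤ = ⊤ := by
    simp only [f, ENNReal.top_rpow_of_pos hs]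
    exact ENNReal.mul_top (ENNReal.ofReal_pos.mpr (by positivity)).ne'
  show lambdaP d q Ω ≤ f (sInf _)
  rw [hf_mono.map_sInf_of_continuousAt hf_cont.continuousAt hf_top]
  refine le_sInf ?_
  rintro _ ⟨_, ⟨u, hu, hcs, hΩ, hne, rfl⟩, rfl⟩
  obtain ⟨x₀, hx₀⟩ := Function.ne_iff.mp hne
  set g : ℝ → ℝ := fun t => ‖t‖ ^ (p / q)
  have hg0 : g 0 = 0 := by simp [g, hr.ne']
  calc lambdaP d q Ω ≤ ENNReal.ofReal (rayleighQuotient volume q fun x => ‖u x‖ ^ (p / q)) :=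
        lambdaP_le_ofReal_rayleighQuotient (hu.norm_rpow ((one_lt_div hq).mpr hqp))
          (hcs.comp_left (g := g) hg0) ((tsupport_comp_subset (g := g) hg0 u).trans hΩ)
          (Function.ne_iff.mpr ⟨x₀, (Real.rpow_pos_of_pos (norm_pos_iff.mpr hx₀) _).ne'⟩)
    _ ≤ ENNReal.ofReal ((p / q) ^ q * rayleighQuotient volume p u ^ (q / p)) :=
        ENNReal.ofReal_le_ofReal (rayleighQuotient_norm_rpow_le hq hqp hu hcs)
    _ = f (ENNReal.ofReal (rayleighQuotient volume p u)) := by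
        rw [ENNReal.ofReal_mul (by positivity),
          ← ENNReal.ofReal_rpow_of_nonneg (rayleighQuotient_nonneg _ _ _) hs.le]

theorem div_le_rpow_div_rpow_of_le_mul_rpow {a b p q : ℝ} (hq : 0 < q) (hqp : q ≤ p)
    (ha : 0 ≤ a) (hb : 0 < b) (h : b ≤ (p / q) ^ q * a ^ (q / p)) :
    q / p ≤ a ^ (1 / p) / b ^ (1 / q) := by
  have hp : 0 < p := hq.trans_le hqp
  have hroot : b ^ (1 / q) ≤ p / q * a ^ (1 / p) :=
    calc b ^ (1 / q) ≤ ((p / q) ^ q * a ^ (q / p)) ^ (1 / q) := by gcongr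
      _ = p / q * a ^ (1 / p) := by
        rw [Real.mul_rpow (by positivity) (by positivity), ← Real.rpow_mul (by positivity),
          ← Real.rpow_mul ha, mul_one_div_cancel hq.ne', Real.rpow_one]
        field_simp
  rw [le_div_iff₀ (by positivity)]
  calc q / p * b ^ (1 / q) ≤ q / p * (p / q * a ^ (1 / p)) := by gcongr
    _ = a ^ (1 / p) := by field_simp

theorem cheeger_pq_general (d : ℕ) (p q : ℝ) (hq : 1 ≤ q) (hqp : q ≤ p)
    (Ω : Set (EuclideanSpace ℝ (Fin d)))
    (hpfin : lambdaP d p Ω < ⊤)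
    (hq0 : 0 < lambdaP d q Ω) (hqfin : lambdaP d q Ω < ⊤) :
    q / p ≤ (lambdaP d p Ω).toReal ^ (1 / p) / (lambdaP d q Ω).toReal ^ (1 / q) ∧
      (lambdaP d q Ω).toReal ≤ (p / q) ^ q * (lambdaP d p Ω).toReal ^ (q / p) := by
  have hq' : 0 < q := one_pos.trans_le hq
  have hbound : (lambdaP d q Ω).toReal ≤ (p / q) ^ q * (lambdaP d p Ω).toReal ^ (q / p) := by
    have h := ENNReal.toReal_mono
      (ENNReal.mul_ne_top ENNReal.ofReal_ne_top
        (ENNReal.rpow_ne_top_of_nonneg (div_pos hq' (hq'.trans_le hqp)).le hpfin.ne))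
      (lambdaP_le_ofReal_mul_lambdaP_rpow hq' hqp Ω)
    rwa [ENNReal.toReal_mul, ENNReal.toReal_ofReal (by positivity [hq'.trans_le hqp]),
      ← ENNReal.toReal_rpow] at h
  exact ⟨div_le_rpow_div_rpow_of_le_mul_rpow hq' hqp ENNReal.toReal_nonneg
    (ENNReal.toReal_pos hq0.ne' hqfin.ne) hbound, hbound⟩

/-- Generalized Cheeger inequality: for `1 ≤ q ≤ p < ∞` and an open set `Ω` with
finite positive eigenvalues, `λ_p(Ω)^{1/p} / λ_q(Ω)^{1/q} ≥ q/p`, equivalently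
`λ_q(Ω) ≤ (p/q)^q λ_p(Ω)^{q/p}`. -/
theorem cheeger_pq (d : ℕ) (p q : ℝ) (hq : 1 ≤ q) (hqp : q ≤ p)
    (Ω : Set (EuclideanSpace ℝ (Fin d))) (hΩ : IsOpen Ω)
    (hp0 : 0 < lambdaP d p Ω) (hpfin : lambdaP d p Ω < ⊤)
    (hq0 : 0 < lambdaP d q Ω) (hqfin : lambdaP d q Ω < ⊤) :
    q / p ≤ (lambdaP d p Ω).toReal ^ (1 / p) / (lambdaP d q Ω).toReal ^ (1 / q) ∧
      (lambdaP d q Ω).toReal ≤ (p / q) ^ q * (lambdaP d p Ω).toReal ^ (q / p) :=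
  cheeger_pq_general d p q hq hqp Ω hpfin hq0 hqfin
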